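/- Let p > 5, γ < 0, and c_p := (2(p+1))^{1/(p−1)}. Define 𝒬(y) := − ∫_{−∞}^0 Q′(x−y)² dx − ∫_{−∞}^0 Q(x−y)² dx + (|γ|/2) Q(−y)² − (1/(2|γ|)) ( |γ| Q(−y) − 2 Q′(−y) )². Then, as y → +∞, 𝒬(y) = (1 − 2/|γ|) c_p² e^{−2y} − (4p(|γ|−2)/(|γ|(p−1))) c_p² e^{−(p+1)y} + o(e^{−(p+1)y}); that is, y ↦ 𝒬(y) − (1 − 2/|γ|) c_p² e^{−2y} + (4p(|γ|−2)/(|γ|(p−1))) c_p² e^{−(p+1)y} is o(e^{−(p+1)y}) as y → +∞. -/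

import Mathlib

open MeasureTheory Real Filter Asymptotics Set

noncomputable section

/-- The ground state `Q` of `-Q'' + Q = Q^p`. -/
def Q (p : ℝ) (x : ℝ) : ℝ :=
  (2 * (p + 1)) ^ (1 / (p - 1)) * (2 * Real.cosh ((p - 1) / 2 * x)) ^ (-(2 / (p - 1)))

/-- The constant `c_p`. -/
def cp (p : ℝ) : ℝ := (2 * (p + 1)) ^ (1 / (p - 1))

/-- The function `𝒬`. -/
def calQ (p γ : ℝ) (y : ℝ) : ℝ :=
  - (∫ x in Set.Iic (0 : ℝ), (deriv (Q p) (x - y)) ^ 2)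
  - (∫ x in Set.Iic (0 : ℝ), (Q p (x - y)) ^ 2)
  + (|γ| / 2) * (Q p (-y)) ^ 2
  - (1 / (2 * |γ|)) * (|γ| * Q p (-y) - 2 * deriv (Q p) (-y)) ^ 2



lemma bern_up {q s : ℝ} (hq0 : 0 ≤ q) (hq : q ≤ 5) (hs0 : 0 ≤ s) (hs1 : s ≤ 1) :
    (1+s) ^ q ≤ 1 + 31*s := by
  have h1 : (1+s) ^ q ≤ (1+s) ^ (5:ℝ) :=
    Real.rpow_le_rpow_of_exponent_le (by linarith) hq
  have h2 : (1+s) ^ (5:ℝ) = (1+s) ^ (5:ℕ) := by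
    rw [← Real.rpow_natCast (1+s) 5]; norm_num
  have h3 : (1+s) ^ (5:ℕ) ≤ 1 + 31*s := by
    have e2 : s^2 ≤ s := by nlinarith
    have e3 : s^3 ≤ s := by nlinarith
    have e4 : s^4 ≤ s := by nlinarith
    have e5 : s^5 ≤ s := by nlinarith
    ring_nf
    nlinarith
  calc (1+s)^q ≤ (1+s)^(5:ℝ) := h1
    _ = (1+s)^(5:ℕ) := h2
    _ ≤ 1 + 31*s := h3

lemma lemA {a t : ℝ} (ha : 0 < a) (ha4 : a ≤ 4) (ht : 0 ≤ t) (ht1 : t ≤ 1) :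
    0 ≤ (1+t) ^ (-a) - (1 - a*t) ∧ (1+t) ^ (-a) - (1 - a*t) ≤ 62*t^2 := by
  -- derivative facts
  have hder : ∀ s : ℝ, 0 ≤ s → HasDerivAt (fun x : ℝ => (1+x) ^ (-a) - (1 - a*x))
      (-a * (1+s) ^ (-a-1) + a) s := by
    intro s hs
    have h1 : HasDerivAt (fun x : ℝ => 1+x) 1 s := (hasDerivAt_id s).const_add 1
    have h2 := h1.rpow_const (p := -a) (Or.inl (by positivity))
    have h3 : HasDerivAt (fun x : ℝ => 1 - a*x) (-a) s := by
      simpa using ((hasDerivAt_id s).const_mul a).const_sub 1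
    exact (h2.sub h3).congr_deriv (by ring)
  have hderiv_nonneg : ∀ s : ℝ, 0 ≤ s → 0 ≤ -a * (1+s) ^ (-a-1) + a := by
    intro s hs
    have h1 : (1+s) ^ (-a-1) ≤ 1 :=
      Real.rpow_le_one_of_one_le_of_nonpos (by linarith) (by linarith)
    nlinarith
  have hderiv_le : ∀ s : ℝ, 0 ≤ s → s ≤ 1 → -a * (1+s) ^ (-a-1) + a ≤ 124*s := by
    intro s hs hs1
    have hX1 : (1:ℝ) ≤ (1+s) ^ (a+1) :=
      Real.one_le_rpow (by linarith) (by linarith)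
    have hXpos : (0:ℝ) < (1+s) ^ (a+1) := by linarith
    have hXinv : (1+s) ^ (-a-1) = ((1+s) ^ (a+1))⁻¹ := by
      rw [show -a-1 = -(a+1) by ring, Real.rpow_neg (by linarith)]
    have hup : (1+s) ^ (a+1) ≤ 1 + 31*s := bern_up (by linarith) (by linarith) hs hs1
    set X := (1+s) ^ (a+1)
    have hXmul : X * X⁻¹ = 1 := mul_inv_cancel₀ (ne_of_gt hXpos)
    have key : 1 - X⁻¹ ≤ 31*s := by
      have h2 : 1 - X⁻¹ ≤ X - 1 := by nlinarith [sq_nonneg (X - 1), inv_pos.mpr hXpos]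
      linarith
    rw [hXinv]
    nlinarith
  -- monotonicity setup
  have mono : ∀ (F : ℝ → ℝ) (F' : ℝ → ℝ), (∀ s ∈ Icc (0:ℝ) 1, HasDerivAt F (F' s) s) →
      (∀ s ∈ Ioo (0:ℝ) 1, 0 ≤ F' s) → F 0 ≤ F t := by
    intro F F' hF hF'
    have : MonotoneOn F (Icc 0 1) := by
      apply monotoneOn_of_deriv_nonneg (convex_Icc 0 1)
      · exact fun x hx => (hF x hx).continuousAt.continuousWithinAt
      · intro x hx
        rw [interior_Icc] at hx
        exact (hF x ⟨hx.1.le, hx.2.le⟩).differentiableAt.differentiableWithinAt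
      · intro x hx
        rw [interior_Icc] at hx
        rw [(hF x ⟨hx.1.le, hx.2.le⟩).deriv]
        exact hF' x hx
    exact this ⟨le_refl 0, by norm_num⟩ ⟨ht, ht1⟩ ht
  constructor
  · have := mono (fun x => (1+x) ^ (-a) - (1 - a*x)) (fun s => -a * (1+s) ^ (-a-1) + a)
      (fun s hs => hder s hs.1) (fun s hs => hderiv_nonneg s hs.1.le)
    simpa [Real.one_rpow] using this
  · have := mono (fun x => 62*x^2 - ((1+x) ^ (-a) - (1 - a*x)))
      (fun s => 124*s - (-a * (1+s) ^ (-a-1) + a))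
      (fun s hs => by
        have h1 : HasDerivAt (fun x : ℝ => 62*x^2) (124*s) s := by
          have := (hasDerivAt_pow 2 s).const_mul (62:ℝ)
          refine this.congr_deriv (Eq.symm ?_)
          norm_num; ring
        exact h1.sub (hder s hs.1))
      (fun s hs => by have := hderiv_le s hs.1.le hs.2.le; linarith)
    norm_num at this
    linarith

lemma expand {a t : ℝ} (ha : 0 < a) (ha1 : a ≤ 1) (ht : 0 ≤ t) (ht1 : t ≤ 1) :
    |(1+t) ^ (-a) - 1 + a*t| ≤ 100*t^2 ∧
    |(1-t) * (1+t) ^ (-(a+1)) - 1 + (a+2)*t| ≤ 100*t^2 ∧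
    |(1-t)^2 * (1+t) ^ (-(a+2)) - 1 + (a+4)*t| ≤ 100*t^2 := by
  obtain ⟨h0l, h0u⟩ := lemA ha (by linarith) ht ht1
  obtain ⟨h1l, h1u⟩ := lemA (show (0:ℝ) < a+1 by linarith) (by linarith) ht ht1
  obtain ⟨h2l, h2u⟩ := lemA (show (0:ℝ) < a+2 by linarith) (by linarith) ht ht1
  have hb1 : (1+t) ^ (-(a+1)) ≤ 1 :=
    Real.rpow_le_one_of_one_le_of_nonpos (by linarith) (by linarith)
  have hb2 : (1+t) ^ (-(a+2)) ≤ 1 :=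
    Real.rpow_le_one_of_one_le_of_nonpos (by linarith) (by linarith)
  refine ⟨?_, ?_, ?_⟩
  · rw [abs_le]; constructor <;> nlinarith
  · rw [abs_le]
    constructor <;> nlinarith [mul_nonneg ht (sub_nonneg.mpr hb1),
      mul_le_mul_of_nonneg_left h1l ht, mul_le_mul_of_nonneg_left h1u ht]
  · rw [abs_le]
    have e1 : 0 ≤ (1+t) ^ (-(a+2)) := Real.rpow_nonneg (by linarith) _
    constructor <;> nlinarith [mul_le_mul_of_nonneg_left h2l ht,
      mul_le_mul_of_nonneg_left h2u ht, mul_nonneg ht (sub_nonneg.mpr hb2),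
      mul_le_mul_of_nonneg_left e1 (mul_nonneg ht ht),
      mul_le_mul_of_nonneg_left hb2 (mul_nonneg ht ht)]

lemma Q_eq {p : ℝ} (hp : 1 < p) (u : ℝ) :
    Q p u = cp p * (Real.exp u * (1 + Real.exp ((p-1)*u)) ^ (-(2/(p-1)))) := by
  have hp1 : p - 1 ≠ 0 := ne_of_gt (by linarith)
  have h2c : 2 * Real.cosh ((p-1)/2 * u)
      = Real.exp (-((p-1)/2*u)) * (1 + Real.exp ((p-1)*u)) := by
    rw [Real.cosh_eq, mul_add, mul_one, ← Real.exp_add]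
    have h : -((p-1)/2*u) + (p-1)*u = (p-1)/2*u := by ring
    rw [h]; ring
  rw [Q, cp, h2c, Real.mul_rpow (le_of_lt (Real.exp_pos _)) (by positivity),
    ← Real.exp_mul]
  have h : -((p-1)/2*u) * (-(2/(p-1))) = u := by field_simp
  rw [h]

lemma Q_hasDeriv {p : ℝ} (hp : 1 < p) (u : ℝ) :
    HasDerivAt (Q p)
      (cp p * (Real.exp u * ((1 - Real.exp ((p-1)*u))
        * (1 + Real.exp ((p-1)*u)) ^ (-(2/(p-1)) - 1)))) u := by
  have hp1 : p - 1 ≠ 0 := ne_of_gt (by linarith)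
  have hQ : Q p = fun v => cp p * (Real.exp v * (1 + Real.exp ((p-1)*v)) ^ (-(2/(p-1)))) :=
    funext fun v => Q_eq hp v
  rw [hQ]
  have hpos : (0:ℝ) < 1 + Real.exp ((p-1)*u) := by positivity
  have h1 : HasDerivAt (fun v : ℝ => (p-1)*v) (p-1) u := by
    simpa using (hasDerivAt_id u).const_mul (p-1)
  have h3 : HasDerivAt (fun v : ℝ => 1 + Real.exp ((p-1)*v))
      (Real.exp ((p-1)*u) * (p-1)) u := (h1.exp).const_add 1
  have h4 := h3.rpow_const (p := -(2/(p-1))) (Or.inl (ne_of_gt hpos))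
  have h5 := ((Real.hasDerivAt_exp u).mul h4).const_mul (cp p)
  refine h5.congr_deriv (Eq.symm ?_)
  have hsplit : (1 + Real.exp ((p-1)*u)) ^ (-(2/(p-1)))
      = (1 + Real.exp ((p-1)*u)) ^ (-(2/(p-1)) - 1) * (1 + Real.exp ((p-1)*u)) := by
    rw [← Real.rpow_add_one (ne_of_gt hpos) (-(2/(p-1)) - 1)]
    norm_num
  rw [hsplit]
  have hc : (p-1) * (2/(p-1)) = 2 := by field_simp
  linear_combination (cp p * Real.exp u
    * (1 + Real.exp ((p-1)*u)) ^ (-(2/(p-1)) - 1) * Real.exp ((p-1)*u)) * hc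

lemma cp_pos {p : ℝ} (hp : 1 < p) : 0 < cp p := by
  unfold cp; positivity

lemma exp_basics {p u : ℝ} (hp : 1 < p) :
    Real.exp ((p+1)*u) = Real.exp (2*u) * Real.exp ((p-1)*u) ∧
    Real.exp (2*p*u) = Real.exp (2*u) * (Real.exp ((p-1)*u))^2 := by
  constructor
  · rw [← Real.exp_add]; congr 1; ring
  · rw [pow_two, ← Real.exp_add, ← Real.exp_add]; congr 1; ring

lemma estQ {p : ℝ} (hp : 5 < p) {u : ℝ} (hu : u ≤ 0) :
    |(Q p u)^2 - cp p^2 * (Real.exp (2*u) - (4/(p-1)) * Real.exp ((p+1)*u))|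
      ≤ 100 * cp p^2 * Real.exp (2*p*u) := by
  have hp1 : (1:ℝ) < p := by linarith
  have hpos : (0:ℝ) < 1 + Real.exp ((p-1)*u) := by positivity
  have hcp : 0 < cp p := cp_pos hp1
  set t := Real.exp ((p-1)*u) with htdef
  have ht0 : 0 < t := Real.exp_pos _
  have ht1 : t ≤ 1 := Real.exp_le_one_iff.mpr (by nlinarith)
  have ha : (0:ℝ) < 4/(p-1) := div_pos (by norm_num) (by linarith)
  have ha1 : 4/(p-1) ≤ 1 := by rw [div_le_one (by linarith)]; linarith
  have hE := (expand ha ha1 ht0.le ht1).1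
  have hrp : (1+t) ^ (-(2/(p-1))) * (1+t) ^ (-(2/(p-1))) = (1+t) ^ (-(4/(p-1))) := by
    rw [← Real.rpow_add hpos]; congr 1; ring
  have hsq : (Q p u)^2 = cp p^2 * Real.exp (2*u) * (1+t) ^ (-(4/(p-1))) := by
    rw [show (Q p u)^2 = Q p u * Q p u from sq (Q p u) ▸ rfl, Q_eq hp1 u,
      show cp p * (Real.exp u * (1+t) ^ (-(2/(p-1)))) * (cp p * (Real.exp u * (1+t) ^ (-(2/(p-1)))))
        = cp p^2 * (Real.exp u * Real.exp u) * ((1+t) ^ (-(2/(p-1))) * (1+t) ^ (-(2/(p-1)))) from by ring,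
      hrp, ← Real.exp_add, show u + u = 2*u from by ring]
  obtain ⟨hid1, hid2⟩ := exp_basics (u := u) hp1
  have key : (Q p u)^2 - cp p^2 * (Real.exp (2*u) - (4/(p-1)) * Real.exp ((p+1)*u))
      = cp p^2 * Real.exp (2*u) * ((1+t) ^ (-(4/(p-1))) - 1 + (4/(p-1))*t) := by
    rw [hsq, hid1]; ring
  rw [key, hid2, abs_mul,
    abs_of_pos (mul_pos (pow_pos hcp 2) (Real.exp_pos _) : (0:ℝ) < cp p^2 * Real.exp (2*u))]
  calc cp p^2 * Real.exp (2*u) * |(1+t) ^ (-(4/(p-1))) - 1 + (4/(p-1))*t|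
      ≤ cp p^2 * Real.exp (2*u) * (100*t^2) :=
        mul_le_mul_of_nonneg_left hE (le_of_lt (mul_pos (pow_pos hcp 2) (Real.exp_pos _)))
    _ = 100 * cp p^2 * (Real.exp (2*u) * t^2) := by ring

lemma estQd {p : ℝ} (hp : 5 < p) {u : ℝ} (hu : u ≤ 0) :
    |(deriv (Q p) u)^2 - cp p^2 * (Real.exp (2*u) - (4/(p-1)+4) * Real.exp ((p+1)*u))|
      ≤ 100 * cp p^2 * Real.exp (2*p*u) := by
  have hp1 : (1:ℝ) < p := by linarith
  have hpos : (0:ℝ) < 1 + Real.exp ((p-1)*u) := by positivity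
  have hcp : 0 < cp p := cp_pos hp1
  set t := Real.exp ((p-1)*u) with htdef
  have ht0 : 0 < t := Real.exp_pos _
  have ht1 : t ≤ 1 := Real.exp_le_one_iff.mpr (by nlinarith)
  have ha : (0:ℝ) < 4/(p-1) := div_pos (by norm_num) (by linarith)
  have ha1 : 4/(p-1) ≤ 1 := by rw [div_le_one (by linarith)]; linarith
  have hE := (expand ha ha1 ht0.le ht1).2.2
  have hd : deriv (Q p) u = cp p * (Real.exp u * ((1-t) * (1+t) ^ (-(2/(p-1)) - 1))) :=
    (Q_hasDeriv hp1 u).deriv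
  have hrp : (1+t) ^ (-(2/(p-1)) - 1) * (1+t) ^ (-(2/(p-1)) - 1) = (1+t) ^ (-(4/(p-1)+2)) := by
    rw [← Real.rpow_add hpos]; congr 1; ring
  have hsq : (deriv (Q p) u)^2 = cp p^2 * Real.exp (2*u) * ((1-t)^2 * (1+t) ^ (-(4/(p-1)+2))) := by
    rw [show (deriv (Q p) u)^2 = deriv (Q p) u * deriv (Q p) u from sq (deriv (Q p) u) ▸ rfl, hd,
      show cp p * (Real.exp u * ((1-t) * (1+t) ^ (-(2/(p-1)) - 1)))
          * (cp p * (Real.exp u * ((1-t) * (1+t) ^ (-(2/(p-1)) - 1))))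
        = cp p^2 * (Real.exp u * Real.exp u)
          * ((1-t)^2 * ((1+t) ^ (-(2/(p-1)) - 1) * (1+t) ^ (-(2/(p-1)) - 1))) from by ring,
      hrp, ← Real.exp_add, show u + u = 2*u from by ring]
  obtain ⟨hid1, hid2⟩ := exp_basics (u := u) hp1
  have key : (deriv (Q p) u)^2 - cp p^2 * (Real.exp (2*u) - (4/(p-1)+4) * Real.exp ((p+1)*u))
      = cp p^2 * Real.exp (2*u) * ((1-t)^2 * (1+t) ^ (-(4/(p-1)+2)) - 1 + (4/(p-1)+4)*t) := by
    rw [hsq, hid1]; ring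
  have hE' : |(1-t)^2 * (1+t) ^ (-(4/(p-1)+2)) - 1 + (4/(p-1)+4)*t| ≤ 100*t^2 := by
    have : -(4/(p-1)+2) = -(4/(p-1)) - 2 := by ring
    convert hE using 3 <;> ring
  rw [key, hid2, abs_mul,
    abs_of_pos (mul_pos (pow_pos hcp 2) (Real.exp_pos _) : (0:ℝ) < cp p^2 * Real.exp (2*u))]
  calc cp p^2 * Real.exp (2*u) * |(1-t)^2 * (1+t) ^ (-(4/(p-1)+2)) - 1 + (4/(p-1)+4)*t|
      ≤ cp p^2 * Real.exp (2*u) * (100*t^2) :=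
        mul_le_mul_of_nonneg_left hE' (le_of_lt (mul_pos (pow_pos hcp 2) (Real.exp_pos _)))
    _ = 100 * cp p^2 * (Real.exp (2*u) * t^2) := by ring

lemma estQQd {p : ℝ} (hp : 5 < p) {u : ℝ} (hu : u ≤ 0) :
    |Q p u * deriv (Q p) u - cp p^2 * (Real.exp (2*u) - (4/(p-1)+2) * Real.exp ((p+1)*u))|
      ≤ 100 * cp p^2 * Real.exp (2*p*u) := by
  have hp1 : (1:ℝ) < p := by linarith
  have hpos : (0:ℝ) < 1 + Real.exp ((p-1)*u) := by positivity
  have hcp : 0 < cp p := cp_pos hp1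
  set t := Real.exp ((p-1)*u) with htdef
  have ht0 : 0 < t := Real.exp_pos _
  have ht1 : t ≤ 1 := Real.exp_le_one_iff.mpr (by nlinarith)
  have ha : (0:ℝ) < 4/(p-1) := div_pos (by norm_num) (by linarith)
  have ha1 : 4/(p-1) ≤ 1 := by rw [div_le_one (by linarith)]; linarith
  have hE := (expand ha ha1 ht0.le ht1).2.1
  have hd : deriv (Q p) u = cp p * (Real.exp u * ((1-t) * (1+t) ^ (-(2/(p-1)) - 1))) :=
    (Q_hasDeriv hp1 u).deriv
  have hrp : (1+t) ^ (-(2/(p-1))) * (1+t) ^ (-(2/(p-1)) - 1) = (1+t) ^ (-(4/(p-1)+1)) := by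
    rw [← Real.rpow_add hpos]; congr 1; ring
  have hsq : Q p u * deriv (Q p) u
      = cp p^2 * Real.exp (2*u) * ((1-t) * (1+t) ^ (-(4/(p-1)+1))) := by
    rw [Q_eq hp1 u, hd,
      show cp p * (Real.exp u * (1+t) ^ (-(2/(p-1))))
          * (cp p * (Real.exp u * ((1-t) * (1+t) ^ (-(2/(p-1)) - 1))))
        = cp p^2 * (Real.exp u * Real.exp u)
          * ((1-t) * ((1+t) ^ (-(2/(p-1))) * (1+t) ^ (-(2/(p-1)) - 1))) from by ring,
      hrp, ← Real.exp_add, show u + u = 2*u from by ring]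
  obtain ⟨hid1, hid2⟩ := exp_basics (u := u) hp1
  have key : Q p u * deriv (Q p) u - cp p^2 * (Real.exp (2*u) - (4/(p-1)+2) * Real.exp ((p+1)*u))
      = cp p^2 * Real.exp (2*u) * ((1-t) * (1+t) ^ (-(4/(p-1)+1)) - 1 + (4/(p-1)+2)*t) := by
    rw [hsq, hid1]; ring
  have hE' : |(1-t) * (1+t) ^ (-(4/(p-1)+1)) - 1 + (4/(p-1)+2)*t| ≤ 100*t^2 := by
    convert hE using 3 <;> ring
  rw [key, hid2, abs_mul,
    abs_of_pos (mul_pos (pow_pos hcp 2) (Real.exp_pos _) : (0:ℝ) < cp p^2 * Real.exp (2*u))]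
  calc cp p^2 * Real.exp (2*u) * |(1-t) * (1+t) ^ (-(4/(p-1)+1)) - 1 + (4/(p-1)+2)*t|
      ≤ cp p^2 * Real.exp (2*u) * (100*t^2) :=
        mul_le_mul_of_nonneg_left hE' (le_of_lt (mul_pos (pow_pos hcp 2) (Real.exp_pos _)))
    _ = 100 * cp p^2 * (Real.exp (2*u) * t^2) := by ring

lemma intOn_exp {k : ℝ} (hk : 0 < k) (b : ℝ) :
    IntegrableOn (fun u : ℝ => Real.exp (k*u)) (Iic b) := by
  rw [show (fun u : ℝ => Real.exp (k*u)) = (fun x : ℝ => Real.exp (-k*x)) ∘ Neg.neg from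
      by funext x; simp [Function.comp, neg_mul_neg],
    show Iic b = Neg.neg ⁻¹' (Ici (-b)) from by ext x; simp,
    (Measure.measurePreserving_neg (volume : Measure ℝ)).integrableOn_comp_preimage
      (Homeomorph.neg ℝ).measurableEmbedding]
  exact (integrableOn_Ici_iff_integrableOn_Ioi (by simp)).2 (exp_neg_integrableOn_Ioi _ hk)

lemma int_exp {k : ℝ} (hk : 0 < k) (b : ℝ) :
    ∫ u in Iic b, Real.exp (k*u) = Real.exp (k*b) / k := by
  have hder : ∀ x ∈ Iic b, HasDerivAt (fun u => Real.exp (k*u)/k) (Real.exp (k*x)) x := by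
    intro x _
    have h1 : HasDerivAt (fun u : ℝ => k*u) k x := by simpa using (hasDerivAt_id x).const_mul k
    have h2 := (h1.exp).div_const k
    refine h2.congr_deriv (Eq.symm ?_)
    field_simp
  have htend : Tendsto (fun u => Real.exp (k*u)/k) atBot (nhds 0) := by
    have h1 : Tendsto (fun u : ℝ => k*u) atBot atBot :=
      (tendsto_const_mul_atBot_of_pos hk).2 tendsto_id
    have := (Real.tendsto_exp_atBot.comp h1).div_const k
    simpa using this
  have := integral_Iic_of_hasDerivAt_of_tendsto' hder (intOn_exp hk b) htend
  rw [this, sub_zero]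

lemma shiftIntegral (f : ℝ → ℝ) (y : ℝ) :
    ∫ x in Iic (0:ℝ), f (x - y) = ∫ u in Iic (-y), f u := by
  rw [← integral_indicator (measurableSet_Iic (a := (0:ℝ))),
    ← integral_indicator (measurableSet_Iic (a := -y)),
    show (Iic (0:ℝ)).indicator (fun x => f (x - y)) = fun x => (Iic (-y)).indicator f (x - y) from
      by funext x; simp only [Set.indicator_apply, Set.mem_Iic, sub_le_iff_le_add, neg_add_cancel],
    integral_sub_right_eq_self ((Iic (-y)).indicator f) y]

lemma contQ {p : ℝ} (hp : 1 < p) : Continuous (Q p) := by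
  rw [show Q p = fun v => cp p * (Real.exp v * (1 + Real.exp ((p-1)*v)) ^ (-(2/(p-1)))) from
    funext fun v => Q_eq hp v]
  refine continuous_const.mul (continuous_exp.mul (Continuous.rpow_const ?_ fun x => Or.inl ?_))
  · exact continuous_const.add (continuous_exp.comp (continuous_const.mul continuous_id))
  · positivity

lemma contQd {p : ℝ} (hp : 1 < p) : Continuous (deriv (Q p)) := by
  rw [show deriv (Q p) = fun v => cp p * (Real.exp v * ((1 - Real.exp ((p-1)*v))
      * (1 + Real.exp ((p-1)*v)) ^ (-(2/(p-1)) - 1))) from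
    funext fun v => (Q_hasDeriv hp v).deriv]
  refine continuous_const.mul (continuous_exp.mul (Continuous.mul ?_
    (Continuous.rpow_const ?_ fun x => Or.inl ?_)))
  · exact continuous_const.sub (continuous_exp.comp (continuous_const.mul continuous_id))
  · exact continuous_const.add (continuous_exp.comp (continuous_const.mul continuous_id))
  · positivity

lemma int_est {p : ℝ} (hp : 5 < p) {f : ℝ → ℝ} (hf : Continuous f) (m C : ℝ) (hC : 0 ≤ C)
    (hpt : ∀ u ≤ (0:ℝ), |f u - C * (Real.exp (2*u) - m * Real.exp ((p+1)*u))|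
      ≤ 100 * C * Real.exp (2*p*u))
    {b : ℝ} (hb : b ≤ 0) :
    |(∫ u in Iic b, f u) - C * (Real.exp (2*b)/2 - m * (Real.exp ((p+1)*b)/(p+1)))|
      ≤ 100 * C * (Real.exp (2*p*b) / (2*p)) := by
  have h2 : (0:ℝ) < 2 := two_pos
  have hp1 : (0:ℝ) < p+1 := by linarith
  have h2p : (0:ℝ) < 2*p := by linarith
  have g1 := intOn_exp h2 b
  have g2 := intOn_exp hp1 b
  have g3 := intOn_exp h2p b
  set main : ℝ → ℝ := fun u => C * (Real.exp (2*u) - m * Real.exp ((p+1)*u)) with hmaindef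
  have hmain : IntegrableOn main (Iic b) := ((g1.sub (g2.const_mul m)).const_mul C)
  have hcm : Continuous main := by
    apply continuous_const.mul
    exact (continuous_exp.comp (continuous_const.mul continuous_id)).sub
      (continuous_const.mul (continuous_exp.comp (continuous_const.mul continuous_id)))
  have hrem : IntegrableOn (fun u => f u - main u) (Iic b) := by
    apply Integrable.mono' (g3.const_mul (100*C)) ((hf.sub hcm).aestronglyMeasurable.restrict)
    refine (ae_restrict_iff' measurableSet_Iic).2 (ae_of_all _ fun u hu => ?_)
    rw [Real.norm_eq_abs]
    exact hpt u (le_trans hu hb)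
  have hif : IntegrableOn f (Iic b) :=
    (hmain.add hrem).congr (ae_of_all _ fun u => by simp)
  have hsplit : (∫ u in Iic b, f u) = (∫ u in Iic b, main u) + ∫ u in Iic b, (f u - main u) := by
    rw [← integral_add hmain hrem]
    simp
  have hmi : (∫ u in Iic b, main u) = C * (Real.exp (2*b)/2 - m * (Real.exp ((p+1)*b)/(p+1))) := by
    rw [hmaindef]
    simp only
    rw [integral_const_mul, integral_sub g1 (g2.const_mul m), integral_const_mul,
      int_exp h2 b, int_exp hp1 b]
  have hbound : |∫ u in Iic b, (f u - main u)| ≤ 100 * C * (Real.exp (2*p*b) / (2*p)) := by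
    have h1 : ‖∫ u in Iic b, (f u - main u)‖ ≤ ∫ u in Iic b, 100 * C * Real.exp (2*p*u) := by
      apply norm_integral_le_of_norm_le (g3.const_mul (100*C))
      refine (ae_restrict_iff' measurableSet_Iic).2 (ae_of_all _ fun u hu => ?_)
      rw [Real.norm_eq_abs]
      exact hpt u (le_trans hu hb)
    rw [Real.norm_eq_abs] at h1
    rwa [integral_const_mul, int_exp h2p b] at h1
  calc |(∫ u in Iic b, f u) - C * (Real.exp (2*b)/2 - m * (Real.exp ((p+1)*b)/(p+1)))|
      = |∫ u in Iic b, (f u - main u)| := by rw [hsplit, hmi]; congr 1; ring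
    _ ≤ 100 * C * (Real.exp (2*p*b) / (2*p)) := hbound

set_option maxHeartbeats 2000000 in
theorem stmt12 (p γ : ℝ) (hp : 5 < p) (hγ : γ < 0) :
    (fun y : ℝ => calQ p γ y
        - (1 - 2 / |γ|) * cp p ^ 2 * Real.exp (-2 * y)
        + (4 * p * (|γ| - 2) / (|γ| * (p - 1))) * cp p ^ 2 * Real.exp (-(p + 1) * y))
      =o[atTop] (fun y : ℝ => Real.exp (-(p + 1) * y)) := by
  have hp1 : (1:ℝ) < p := by linarith
  have hg : |γ| = -γ := abs_of_neg hγ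
  have hg0 : (0:ℝ) < -γ := neg_pos.2 hγ
  have hcp : 0 < cp p := cp_pos hp1
  have hO : (fun y : ℝ => calQ p γ y
        - (1 - 2 / |γ|) * cp p ^ 2 * Real.exp (-2 * y)
        + (4 * p * (|γ| - 2) / (|γ| * (p - 1))) * cp p ^ 2 * Real.exp (-(p + 1) * y))
      =O[atTop] (fun y : ℝ => Real.exp (-(2*p) * y)) := by
    rw [isBigO_iff]
    refine ⟨100 * cp p^2 * (1/(2*p)) + 100 * cp p^2 * (1/(2*p)) + ((-γ)/2) * (100 * cp p^2)
      + (1/(2*(-γ))) * ((-γ)^2 * (100 * cp p^2) + 4*(-γ) * (100 * cp p^2) + 4 * (100 * cp p^2)), ?_⟩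
    filter_upwards [eventually_ge_atTop (0:ℝ)] with y hy
    simp only [Real.norm_eq_abs, Real.abs_exp]
    rw [hg]
    obtain ⟨G, hGdef⟩ : ∃ G : ℝ, G = -γ := ⟨-γ, rfl⟩
    have hG0 : (0:ℝ) < G := hGdef ▸ hg0
    rw [← hGdef]
    have hby : -y ≤ (0:ℝ) := by linarith
    have hI1 := int_est hp (f := fun u => (deriv (Q p) u)^2) ((contQd hp1).pow 2) (4/(p-1)+4) (cp p^2) (sq_nonneg _)
      (fun u hu => estQd hp hu) hby
    have hI2 := int_est hp (f := fun u => (Q p u)^2) ((contQ hp1).pow 2) (4/(p-1)) (cp p^2) (sq_nonneg _)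
      (fun u hu => estQ hp hu) hby
    have hB1 := estQ hp hby
    have hB2 := estQd hp hby
    have hB3 := estQQd hp hby
    rw [show (2:ℝ)*(-y) = -2*y by ring, show (p+1)*(-y) = -(p+1)*y by ring,
      show 2*p*(-y) = -(2*p)*y by ring] at hI1 hI2 hB1 hB2 hB3
    have hcal : calQ p γ y = -(∫ u in Iic (-y), (deriv (Q p) u)^2)
        - (∫ u in Iic (-y), (Q p u)^2)
        + (G/2) * (Q p (-y))^2
        - (1/(2*G)) * (G * Q p (-y) - 2 * deriv (Q p) (-y))^2 := by
      rw [calQ, hg, ← hGdef, shiftIntegral (fun u => (deriv (Q p) u)^2) y,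
        shiftIntegral (fun u => (Q p u)^2) y]
    set I1 := ∫ u in Iic (-y), (deriv (Q p) u)^2 with hI1def
    set I2 := ∫ u in Iic (-y), (Q p u)^2 with hI2def
    set q := Q p (-y) with hqdef
    set d := deriv (Q p) (-y) with hddef
    set E2 := Real.exp (-2*y) with hE2def
    set EP := Real.exp (-(p+1)*y) with hEPdef
    set ER := Real.exp (-(2*p)*y) with hERdef
    set r1 := I1 - cp p^2 * (E2/2 - (4/(p-1)+4) * (EP/(p+1))) with hr1def
    set r2 := I2 - cp p^2 * (E2/2 - (4/(p-1)) * (EP/(p+1))) with hr2def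
    set s1 := q^2 - cp p^2 * (E2 - (4/(p-1)) * EP) with hs1def
    set s2 := d^2 - cp p^2 * (E2 - (4/(p-1)+4) * EP) with hs2def
    set s3 := q*d - cp p^2 * (E2 - (4/(p-1)+2) * EP) with hs3def
    have hval : calQ p γ y - (1 - 2 / G) * cp p ^ 2 * E2
        + (4 * p * (G - 2) / (G * (p - 1))) * cp p ^ 2 * EP
        = -r1 - r2 + (G/2) * s1
          - (1/(2*G)) * (G^2 * s1 - 4*G * s3 + 4 * s2) := by
      rw [hcal, hr1def, hr2def, hs1def, hs2def, hs3def]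
      have hpm1 : p - 1 ≠ 0 := by linarith
      have hpp1 : p + 1 ≠ 0 := by linarith
      have hGne : G ≠ 0 := ne_of_gt hG0
      field_simp
      ring
    rw [hval]
    have hER : (0:ℝ) < ER := Real.exp_pos _
    have hM1 := abs_le.1 hI1
    have hM2 := abs_le.1 hI2
    have hN1 := abs_le.1 hB1
    have hN2 := abs_le.1 hB2
    have hN3 := abs_le.1 hB3
    have hg2 : (0:ℝ) ≤ G/2 := by linarith
    have hginv : (0:ℝ) ≤ 1/(2*G) := le_of_lt (one_div_pos.2 (by linarith))
    have u3 : (G/2) * s1 ≤ (G/2) * (100 * cp p^2 * ER) :=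
      mul_le_mul_of_nonneg_left hN1.2 hg2
    have l3 : (G/2) * (-(100 * cp p^2 * ER)) ≤ (G/2) * s1 :=
      mul_le_mul_of_nonneg_left hN1.1 hg2
    have uY : G^2 * s1 - 4*G * s3 + 4 * s2
        ≤ G^2 * (100 * cp p^2 * ER) + 4*G * (100 * cp p^2 * ER)
          + 4 * (100 * cp p^2 * ER) := by
      have a1 := mul_le_mul_of_nonneg_left hN1.2 (sq_nonneg G)
      have a2 := mul_le_mul_of_nonneg_left hN3.1 (by linarith : (0:ℝ) ≤ 4*G)
      have a3 := mul_le_mul_of_nonneg_left hN2.2 (by norm_num : (0:ℝ) ≤ (4:ℝ))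
      linarith
    have lY : -(G^2 * (100 * cp p^2 * ER) + 4*G * (100 * cp p^2 * ER)
          + 4 * (100 * cp p^2 * ER))
        ≤ G^2 * s1 - 4*G * s3 + 4 * s2 := by
      have a1 := mul_le_mul_of_nonneg_left hN1.1 (sq_nonneg G)
      have a2 := mul_le_mul_of_nonneg_left hN3.2 (by linarith : (0:ℝ) ≤ 4*G)
      have a3 := mul_le_mul_of_nonneg_left hN2.1 (by norm_num : (0:ℝ) ≤ (4:ℝ))
      linarith
    have u4 : (1/(2*G)) * (G^2 * s1 - 4*G * s3 + 4 * s2)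
        ≤ (1/(2*G)) * (G^2 * (100 * cp p^2 * ER) + 4*G * (100 * cp p^2 * ER)
          + 4 * (100 * cp p^2 * ER)) :=
      mul_le_mul_of_nonneg_left uY hginv
    have l4 : (1/(2*G)) * (-(G^2 * (100 * cp p^2 * ER) + 4*G * (100 * cp p^2 * ER)
          + 4 * (100 * cp p^2 * ER)))
        ≤ (1/(2*G)) * (G^2 * s1 - 4*G * s3 + 4 * s2) :=
      mul_le_mul_of_nonneg_left lY hginv
    have hKE : (100 * cp p^2 * (1/(2*p)) + 100 * cp p^2 * (1/(2*p)) + (G/2) * (100 * cp p^2)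
        + (1/(2*G)) * (G^2 * (100 * cp p^2) + 4*G * (100 * cp p^2)
          + 4 * (100 * cp p^2))) * ER
        = 100 * cp p^2 * (ER/(2*p)) + 100 * cp p^2 * (ER/(2*p))
          + (G/2) * (100 * cp p^2 * ER)
          + (1/(2*G)) * (G^2 * (100 * cp p^2 * ER) + 4*G * (100 * cp p^2 * ER)
            + 4 * (100 * cp p^2 * ER)) := by ring
    rw [abs_le]
    constructor
    · linarith [hM1.1, hM2.1, l3, l4, hKE]
    · linarith [hM1.2, hM2.2, u3, u4, hKE]

  have ho : (fun y : ℝ => Real.exp (-(2*p) * y)) =o[atTop]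
      (fun y : ℝ => Real.exp (-(p + 1) * y)) := by
    rw [Real.isLittleO_exp_comp_exp_comp]
    have h1 : Tendsto (fun y : ℝ => (p-1) * y) atTop atTop :=
      Tendsto.const_mul_atTop (by linarith) tendsto_id
    exact h1.congr (fun y => by ring)
  exact hO.trans_isLittleO ho


end
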